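/- Let C, t > 0 and let n ≥ 1 be an integer. There exists a constant d_n > 0, depending only on C, t, n, r and q, such that for every Borel probability measure ν on ℝ^q whose support is compact of diameter at most 1 and which satisfies ν(B(x,ε)) ≤ C·ε^t for all x ∈ ℝ^q and all ε > 0, every n-optimal set α_n ∈ C_{n,r}(ν), and every Voronoi partition (P_a(α_n))_{a∈α_n}: min_{a∈α_n} I_a(α_n,ν) > d_n. -/

import Mathlib

open MeasureTheory Metric Set

noncomputable section

variable {E : Type*} [NormedAddCommGroup E] [NormedSpace ℝ E]
  [MeasurableSpace E] [BorelSpace E]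

/-- The (topological) support of a Borel measure: the set of points all of whose
neighborhoods have positive measure. -/
def msupp (μ : Measure E) : Set E := {x | ∀ ε : ℝ, 0 < ε → 0 < μ (ball x ε)}

/-- The set of achievable quantization integrals `∫ d(x,α)^r dν` over sets `α` with
`1 ≤ card α ≤ n`. -/
def quantSet (ν : Measure E) (r : ℝ) (n : ℕ) : Set ℝ :=
  {I | ∃ α : Finset E, α.Nonempty ∧ α.card ≤ n ∧ I = ∫ x, infDist x (α : Set E) ^ r ∂ν}

/-- The `n`-th quantization error of order `r`, raised to the power `r`:
`e_{n,r}(ν)^r = inf { ∫ d(x,α)^r dν : 1 ≤ card α ≤ n }`. -/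
def quantErrPow (ν : Measure E) (r : ℝ) (n : ℕ) : ℝ := sInf (quantSet ν r n)

/-- `α` is an `n`-optimal set for `ν` of order `r`. -/
def IsOptimalSet (ν : Measure E) (r : ℝ) (n : ℕ) (α : Finset E) : Prop :=
  α.Nonempty ∧ α.card ≤ n ∧ (∫ x, infDist x (α : Set E) ^ r ∂ν) = quantErrPow ν r n

/-- `P` is a Voronoi partition (into Borel sets) with respect to the finite set `α`. -/
def IsVoronoiPartition (α : Finset E) (P : E → Set E) : Prop :=
  (∀ a ∈ α, MeasurableSet (P a)) ∧
  ((⋃ a ∈ α, P a) = univ) ∧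
  (∀ a ∈ α, ∀ b ∈ α, a ≠ b → Disjoint (P a) (P b)) ∧
  (∀ a ∈ α, {x | dist x a < infDist x ((α : Set E) \ {a})} ⊆ P a) ∧
  (∀ a ∈ α, P a ⊆ {x | dist x a = infDist x (α : Set E)})

/-- `I_a(α,ν) = ∫_{P_a(α)} d(x,α)^r dν`. -/
def voronoiI (ν : Measure E) (r : ℝ) (α : Finset E) (P : E → Set E) (a : E) : ℝ :=
  ∫ x in P a, infDist x (α : Set E) ^ r ∂ν

/-- `μ` is `s0`-dimensional Ahlfors–David regular with constants `ε0, C1, C2`, together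
with the global upper bound (valid for all centers and radii). -/
def IsAhlfors (μ : Measure E) (s0 ε0 C1 C2 : ℝ) : Prop :=
  0 < s0 ∧ 0 < ε0 ∧ 0 < C1 ∧ 0 < C2 ∧
  (∀ x ∈ msupp μ, ∀ ε : ℝ, 0 < ε → ε < ε0 →
    ENNReal.ofReal (C1 * ε ^ s0) ≤ μ (closedBall x ε) ∧
    μ (closedBall x ε) ≤ ENNReal.ofReal (C2 * ε ^ s0)) ∧
  (∀ x : E, ∀ ε : ℝ, 0 < ε → μ (closedBall x ε) ≤ ENNReal.ofReal (C2 * ε ^ s0))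

/-- `h` is a similitude of ratio `ρ`. -/
def IsSimilitude (h : E → E) (ρ : ℝ) : Prop :=
  Function.Surjective h ∧ ∀ x y, dist (h x) (h y) = ρ * dist x y

/-- The measure `λ_B = μ(·|B) ∘ h`, i.e. `λ_B(A) = μ(h(A) ∩ B)/μ(B)`. -/
def condPull (μ : Measure E) (B : Set E) (h : E → E) : Measure E :=
  Measure.comap h (ProbabilityTheory.cond μ B)

/-- There exist `j` pairwise disjoint closed balls of radius `ρ` centered in `K`. -/
def PackingNum (K : Set E) (ρ : ℝ) (j : ℕ) : Prop :=
  ∃ c : Fin j → E, (∀ i, c i ∈ K) ∧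
    Pairwise fun i i' => Disjoint (closedBall (c i) ρ) (closedBall (c i') ρ)

end

/-!
Every Voronoi cell of an optimal set carries mass at least some `p > 0` depending only on the
data. Indeed, remove the centre `a`: by the growth bound on balls, the remaining centres leave a
set `S` of mass `≥ 1/2` at distance `> ε` from them. Cover the support by `N` balls of radius
`ε/2` centred in the support; one of them, `B(x₀, ε/2)`, meets `S` in mass `≥ 1/(2N)`.
Replacing `a` by `x₀` lowers the error by at least `(ε^r - (ε/2)^r) ν(S ∩ B(x₀, ε/2))` off the
cell of `a` and raises it by at most `ν(P_a)` on that cell (the support has diameter `≤ 1`), so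
optimality bounds `ν(P_a)` from below.
Then, if `C δ^t ≤ p/2`, at least half of the mass of `P_a` lies outside `B(a, δ)`, where
`d(x, α) = d(x, a) > δ`; hence `I_a ≥ δ^r p/2`.
-/

open MeasureTheory Metric Set Filter Topology

theorem exists_pos_mul_rpow_le {t : ℝ} (ht : 0 < t) (K : ℝ) {δ : ℝ} (hδ : 0 < δ) :
    ∃ ε > 0, K * ε ^ t ≤ δ := by
  have hlim : Tendsto (fun ε : ℝ => K * ε ^ t) (𝓝[>] 0) (𝓝 0) := by
    refine tendsto_nhdsWithin_of_tendsto_nhds ?_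
    simpa [Real.zero_rpow ht.ne'] using
      (Real.continuousAt_rpow_const 0 t (Or.inr ht.le)).tendsto.const_mul K
  obtain ⟨ε, hε, hεpos⟩ := ((hlim.eventually (ge_mem_nhds hδ)).and self_mem_nhdsWithin).exists
  exact ⟨ε, hεpos, hε⟩

theorem exists_finset_cover_of_diam_le {G : Type*} [NormedAddCommGroup G] [ProperSpace G]
    {ρ : ℝ} (hρ : 0 < ρ) (R : ℝ) :
    ∃ N : ℕ, ∀ K : Set G, Bornology.IsBounded K → diam K ≤ R →
      ∃ F : Finset G, ↑F ⊆ K ∧ F.card ≤ N ∧ K ⊆ ⋃ y ∈ F, closedBall y ρ := by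
  set M := coveringNumber (ρ.toNNReal / 2) (closedBall (0 : G) R)
  have hM : M ≠ ⊤ := by
    obtain ⟨C, hC0, hC, hcov⟩ := exists_finite_isCover_of_isCompact (ε := ρ.toNNReal / 2)
      (by simpa using hρ) (isCompact_closedBall (0 : G) R)
    exact ne_top_of_le_ne_top hC.encard_lt_top.ne (hcov.coveringNumber_le_encard hC0)
  refine ⟨M.toNat, fun K hKb hKd => ?_⟩
  rcases K.eq_empty_or_nonempty with rfl | ⟨y, hy⟩
  · exact ⟨∅, by simp, by simp, by simp⟩
  have hKy : K ⊆ closedBall y R := fun x hx => (dist_le_diam_of_mem hKb hx hy).trans hKd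
  have hcov : coveringNumber ρ.toNNReal K ≤ M := calc
    _ ≤ coveringNumber (ρ.toNNReal / 2) (closedBall y R) := coveringNumber_subset_le hKy
    _ = M := by
      rw [← vadd_closedBall_zero, ← image_vadd]
      exact (isometry_add_left y).coveringNumber_image
  obtain ⟨C, hCK, hCfin, hCcov, hCcard⟩ :=
    exists_set_encard_eq_coveringNumber (ne_top_of_le_ne_top hM hcov)
  refine ⟨hCfin.toFinset, by simpa using hCK, ?_, ?_⟩
  · rw [← ENat.natCast_le_natCast, ← hCfin.encard_eq_coe_toFinset_card, hCcard,
      ENat.natCast_toNat hM]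
    exact hcov
  · simpa [hρ.le] using hCcov.subset_iUnion_closedBall

theorem exists_le_measureReal_inter_of_ae_mem_biUnion {X ι : Type*} [MeasurableSpace X]
    {μ : Measure X} [IsFiniteMeasure μ] {s : Finset ι} (hs : s.Nonempty) {f : ι → Set X}
    (hf : ∀ᵐ x ∂μ, x ∈ ⋃ i ∈ s, f i) {N : ℕ} (hN : s.card ≤ N) (S : Set X) :
    ∃ i ∈ s, μ.real S / N ≤ μ.real (S ∩ f i) := by
  apply Finset.exists_le_of_sum_le hs
  have hN0 : (0 : ℝ) < N := by exact_mod_cast hs.card_pos.trans_le hN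
  calc ∑ _i ∈ s, μ.real S / N = s.card * (μ.real S / N) := by simp
    _ ≤ N * (μ.real S / N) := by gcongr
    _ = μ.real (S ∩ ⋃ i ∈ s, f i) := by
      rw [mul_div_cancel₀ _ hN0.ne', Measure.real_def, Measure.real_def,
        measure_inter_conull (ae_iff.mp hf)]
    _ ≤ ∑ i ∈ s, μ.real (S ∩ f i) := by
      rw [inter_iUnion₂]
      exact measureReal_biUnion_finset_le _ _

section Support

variable {E : Type*} [NormedAddCommGroup E] [MeasurableSpace E] {ν : Measure E}

theorem msupp_eq_support (ν : Measure E) : msupp ν = ν.support := by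
  ext x
  exact nhds_basis_ball.mem_measureSupport.symm

variable [HereditarilyLindelofSpace E]

theorem ae_mem_msupp (ν : Measure E) : ∀ᵐ x ∂ν, x ∈ msupp ν :=
  (msupp_eq_support ν).symm ▸ Measure.support_mem_ae

theorem msupp_nonempty (ν : Measure E) [NeZero ν] : (msupp ν).Nonempty :=
  (msupp_eq_support ν).symm ▸ Measure.nonempty_support (NeZero.ne ν)

theorem ae_dist_le_of_mem_msupp (hb : Bornology.IsBounded (msupp ν)) {R : ℝ}
    (hd : diam (msupp ν) ≤ R) {y : E} (hy : y ∈ msupp ν) : ∀ᵐ x ∂ν, dist x y ≤ R := by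
  filter_upwards [ae_mem_msupp ν] with x hx
  exact (dist_le_diam_of_mem hb hx hy).trans hd

end Support

section Quantization

variable {E : Type*} [NormedAddCommGroup E] [MeasurableSpace E] {ν : Measure E} {r : ℝ} {n : ℕ}
  {α : Finset E} {P : E → Set E}

theorem IsVoronoiPartition.measurableSet (hP : IsVoronoiPartition α P) {a : E} (ha : a ∈ α) :
    MeasurableSet (P a) :=
  hP.1 a ha

theorem IsVoronoiPartition.dist_eq_infDist (hP : IsVoronoiPartition α P) {a x : E} (ha : a ∈ α)
    (hx : x ∈ P a) : dist x a = infDist x α :=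
  hP.2.2.2.2 a ha hx

theorem IsOptimalSet.integral_le (hα : IsOptimalSet ν r n α) {γ : Finset E} (hγ : γ.Nonempty)
    (hγn : γ.card ≤ n) :
    ∫ x, infDist x α ^ r ∂ν ≤ ∫ x, infDist x γ ^ r ∂ν := by
  rw [hα.2.2]
  refine csInf_le ⟨0, ?_⟩ ⟨γ, hγ, hγn, rfl⟩
  rintro _ ⟨β, -, -, rfl⟩
  exact integral_nonneg fun x => Real.rpow_nonneg infDist_nonneg r

theorem IsVoronoiPartition.exists_mem_erase_dist_eq [DecidableEq E] (hP : IsVoronoiPartition α P)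
    {a x : E} (hx : x ∉ P a) : ∃ b ∈ α.erase a, dist x b = infDist x α := by
  obtain ⟨b, hb, hxb⟩ := mem_iUnion₂.mp (hP.2.1 ▸ mem_univ x)
  exact ⟨b, Finset.mem_erase.mpr ⟨fun h => hx (h ▸ hxb), hb⟩, hP.dist_eq_infDist hb hxb⟩

theorem IsVoronoiPartition.rpow_infDist_insert_add_indicator_le [DecidableEq E]
    (hP : IsVoronoiPartition α P) (hr : 0 ≤ r) {a x₀ x : E} (hx : dist x x₀ ≤ 1) {ρ ε : ℝ}
    (hρ : 0 ≤ ρ) (hρε : ρ ≤ ε) :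
    infDist x (insert x₀ (α.erase a) : Finset E) ^ r +
        ((⋃ b ∈ α.erase a, closedBall b ε)ᶜ ∩ closedBall x₀ ρ).indicator
          (fun _ => ε ^ r - ρ ^ r) x ≤
      infDist x α ^ r + (P a).indicator (fun _ => 1 + (ε ^ r - ρ ^ r)) x := by
  set S := (⋃ b ∈ α.erase a, closedBall b ε)ᶜ ∩ closedBall x₀ ρ
  have hx₀ : infDist x (insert x₀ (α.erase a) : Finset E) ≤ dist x x₀ :=
    infDist_le_dist_of_mem (Finset.mem_coe.mpr (Finset.mem_insert_self _ _))
  by_cases hxa : x ∈ P a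
  · have hS : S.indicator (fun _ => ε ^ r - ρ ^ r) x ≤ ε ^ r - ρ ^ r := by
      have := Real.rpow_le_rpow hρ hρε hr
      by_cases hxS : x ∈ S <;> simp [hxS, this]
    rw [indicator_of_mem hxa]
    linarith [Real.rpow_le_one infDist_nonneg (hx₀.trans hx) hr,
      Real.rpow_nonneg (infDist_nonneg (x := x) (s := α)) r]
  obtain ⟨b, hb, hxb⟩ := hP.exists_mem_erase_dist_eq hxa
  rw [indicator_of_notMem hxa, add_zero, ← hxb]
  by_cases hxS : x ∈ S
  · have hfar : ε ≤ dist x b := not_lt.mp fun h => hxS.1 (mem_iUnion₂.mpr ⟨b, hb, h.le⟩)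
    rw [indicator_of_mem hxS]
    linarith [Real.rpow_le_rpow infDist_nonneg (hx₀.trans hxS.2) hr,
      Real.rpow_le_rpow (hρ.trans hρε) hfar hr]
  · rw [indicator_of_notMem hxS, add_zero]
    exact Real.rpow_le_rpow infDist_nonneg
      (infDist_le_dist_of_mem (Finset.mem_coe.mpr (Finset.mem_insert_of_mem hb))) hr

variable [BorelSpace E]

theorem integrable_infDist_rpow [IsFiniteMeasure ν] {x₀ : E} {R : ℝ}
    (hν : ∀ᵐ x ∂ν, dist x x₀ ≤ R) (hr : 0 ≤ r) {s : Set E} {y : E} (hy : y ∈ s) :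
    Integrable (fun x => infDist x s ^ r) ν := by
  refine Integrable.mono' (integrable_const ((R + dist x₀ y) ^ r))
    ((continuous_infDist_pt s).rpow_const fun _ => Or.inr hr).aestronglyMeasurable ?_
  filter_upwards [hν] with x hx
  rw [Real.norm_of_nonneg (Real.rpow_nonneg infDist_nonneg r)]
  refine Real.rpow_le_rpow infDist_nonneg ?_ hr
  exact (infDist_le_dist_of_mem hy).trans ((dist_triangle x x₀ y).trans (by linarith))

theorem IsVoronoiPartition.mul_sub_le_voronoiI [IsFiniteMeasure ν] (hP : IsVoronoiPartition α P)
    {a : E} (ha : a ∈ α) (hint : Integrable (fun x => infDist x α ^ r) ν) (hr : 0 ≤ r)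
    {δ : ℝ} (hδ : 0 ≤ δ) :
    δ ^ r * (ν.real (P a) - ν.real (closedBall a δ)) ≤ voronoiI ν r α P a := calc
  _ ≤ δ ^ r * ν.real (P a \ closedBall a δ) := by gcongr; exact le_measureReal_sdiff
  _ ≤ ∫ x in P a \ closedBall a δ, infDist x α ^ r ∂ν := by
    refine setIntegral_ge_of_const_le_real ((hP.measurableSet ha).diff measurableSet_closedBall)
      (measure_ne_top _ _) (fun x hx => ?_) hint.integrableOn
    rw [← hP.dist_eq_infDist ha hx.1]
    exact Real.rpow_le_rpow hδ (not_le.mp hx.2).le hr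
  _ ≤ voronoiI ν r α P a :=
    setIntegral_mono_set hint.integrableOn
      (Eventually.of_forall fun x => Real.rpow_nonneg infDist_nonneg r) sdiff_subset.eventuallyLE

theorem IsOptimalSet.mul_measureReal_le [DecidableEq E] [IsFiniteMeasure ν]
    (hα : IsOptimalSet ν r n α) (hP : IsVoronoiPartition α P) {a : E} (ha : a ∈ α) (hr : 0 ≤ r)
    {x₀ : E} (hx₀ : ∀ᵐ x ∂ν, dist x x₀ ≤ 1) {ρ ε : ℝ} (hρ : 0 ≤ ρ) (hρε : ρ ≤ ε) :
    (ε ^ r - ρ ^ r) * ν.real ((⋃ b ∈ α.erase a, closedBall b ε)ᶜ ∩ closedBall x₀ ρ) ≤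
      (1 + (ε ^ r - ρ ^ r)) * ν.real (P a) := by
  set γ := insert x₀ (α.erase a)
  have hS : MeasurableSet ((⋃ b ∈ α.erase a, closedBall b ε)ᶜ ∩ closedBall x₀ ρ) :=
    (Finset.measurableSet_biUnion _ fun b _ => measurableSet_closedBall).compl.inter
      measurableSet_closedBall
  obtain ⟨y, hy⟩ := hα.1
  have hintα := integrable_infDist_rpow hx₀ hr (Finset.mem_coe.mpr hy)
  have hintγ := integrable_infDist_rpow hx₀ hr
    (Finset.mem_coe.mpr (Finset.mem_insert_self x₀ (α.erase a)))
  have hintS := (integrable_const (μ := ν) (ε ^ r - ρ ^ r)).indicator hS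
  have hintP := (integrable_const (μ := ν) (1 + (ε ^ r - ρ ^ r))).indicator (hP.measurableSet ha)
  have hmono := integral_mono_ae (hintγ.add hintS) (hintα.add hintP) <| hx₀.mono fun x hx =>
    hP.rpow_infDist_insert_add_indicator_le hr hx hρ hρε
  rw [integral_add' hintγ hintS, integral_add' hintα hintP, integral_indicator_const _ hS,
    integral_indicator_const _ (hP.measurableSet ha), smul_eq_mul, smul_eq_mul] at hmono
  have hγn : γ.card ≤ n := calc
    γ.card ≤ (α.erase a).card + 1 := Finset.card_insert_le _ _
    _ = α.card := Finset.card_erase_add_one ha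
    _ ≤ n := hα.2.1
  have hopt := hα.integral_le (Finset.insert_nonempty _ _) hγn
  linarith

end Quantization

theorem exists_pos_le_measureReal_voronoiCell {E : Type*} [NormedAddCommGroup E]
    [MeasurableSpace E] [BorelSpace E] [ProperSpace E] {r C t : ℝ} (hr : 0 < r)
    (hC : 0 ≤ C) (ht : 0 < t) (n : ℕ) :
    ∃ p > 0, ∀ ν : Measure E, IsProbabilityMeasure ν → Bornology.IsBounded (msupp ν) →
      diam (msupp ν) ≤ 1 → (∀ x ε, 0 < ε → ν (closedBall x ε) ≤ ENNReal.ofReal (C * ε ^ t)) →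
      ∀ α, IsOptimalSet ν r n α → ∀ P, IsVoronoiPartition α P → ∀ a ∈ α, p ≤ ν.real (P a) := by
  classical
  obtain ⟨ε, hε, hεC⟩ := exists_pos_mul_rpow_le ht (n * C) one_half_pos
  obtain ⟨N, hN⟩ := exists_finset_cover_of_diam_le (G := E) (half_pos hε) 1
  set g := ε ^ r - (ε / 2) ^ r
  have hg : 0 < g := sub_pos.mpr (Real.rpow_lt_rpow (half_pos hε).le (half_lt_self hε) hr)
  refine ⟨g / (2 * (N + 1) * (1 + g)), by positivity, ?_⟩
  intro ν _ hb hd hup α hα P hP a ha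
  obtain ⟨F, hFK, hFN, hcov⟩ := hN _ hb hd
  have hFne : F.Nonempty := by
    obtain ⟨z, hz, -⟩ := mem_iUnion₂.mp (hcov (msupp_nonempty ν).some_mem)
    exact ⟨z, hz⟩
  set S := (⋃ b ∈ α.erase a, closedBall b ε)ᶜ
  have hS : 1 / 2 ≤ ν.real S := by
    have : ν.real (⋃ b ∈ α.erase a, closedBall b ε) ≤ 1 / 2 := calc
      _ ≤ ∑ b ∈ α.erase a, ν.real (closedBall b ε) := measureReal_biUnion_finset_le _ _
      _ ≤ ∑ b ∈ α.erase a, C * ε ^ t :=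
        Finset.sum_le_sum fun b _ => ENNReal.toReal_le_of_le_ofReal (by positivity) (hup b ε hε)
      _ ≤ n * (C * ε ^ t) := by
        rw [Finset.sum_const, nsmul_eq_mul]
        gcongr
        exact_mod_cast (Finset.card_erase_le).trans hα.2.1
      _ ≤ 1 / 2 := by rwa [← mul_assoc]
    rw [measureReal_compl (Finset.measurableSet_biUnion _ fun b _ => measurableSet_closedBall),
      probReal_univ]
    linarith
  obtain ⟨x₀, hx₀F, hx₀⟩ := exists_le_measureReal_inter_of_ae_mem_biUnion hFne
    ((ae_mem_msupp ν).mono fun x hx => hcov hx) (hFN.trans N.le_succ) S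
  have key := hα.mul_measureReal_le hP ha hr.le (ae_dist_le_of_mem_msupp hb hd (hFK hx₀F))
    (half_pos hε).le (half_le_self hε.le)
  push_cast at hx₀
  rw [div_le_iff₀ (by positivity)]
  calc g = 2 * (N + 1) * (g * (1 / 2 / (N + 1))) := by field_simp
    _ ≤ 2 * (N + 1) * (g * (ν.real S / (N + 1))) := by gcongr
    _ ≤ 2 * (N + 1) * (g * ν.real (S ∩ closedBall x₀ (ε / 2))) := by gcongr
    _ ≤ 2 * (N + 1) * ((1 + g) * ν.real (P a)) := by gcongr
    _ = ν.real (P a) * (2 * (N + 1) * (1 + g)) := by ring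

theorem stmt7_general {E : Type*} [NormedAddCommGroup E] [NormedSpace ℝ E]
    [MeasurableSpace E] [BorelSpace E] [FiniteDimensional ℝ E]
    (r : ℝ) (hr : 0 < r)
    (C t : ℝ) (hC : 0 < C) (ht : 0 < t) (n : ℕ) :
    ∃ d : ℝ, 0 < d ∧
      ∀ ν : MeasureTheory.Measure E, MeasureTheory.IsProbabilityMeasure ν →
        IsCompact (msupp ν) → Metric.diam (msupp ν) ≤ 1 →
        (∀ x : E, ∀ ε : ℝ, 0 < ε →
          ν (Metric.closedBall x ε) ≤ ENNReal.ofReal (C * ε ^ t)) →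
        ∀ α : Finset E, IsOptimalSet ν r n α →
          ∀ P : E → Set E, IsVoronoiPartition α P →
            ∀ a ∈ α, d < voronoiI ν r α P a := by
  obtain ⟨p, hp, hmass⟩ := exists_pos_le_measureReal_voronoiCell (E := E) hr hC.le ht n
  obtain ⟨δ, hδ, hδC⟩ := exists_pos_mul_rpow_le ht C (half_pos hp)
  refine ⟨δ ^ r * p / 4, by positivity, ?_⟩
  intro ν _ hK hd hup α hα P hP a ha
  obtain ⟨y, hy⟩ := hα.1
  have hint := integrable_infDist_rpow
    (ae_dist_le_of_mem_msupp hK.isBounded hd (msupp_nonempty ν).some_mem) hr.le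
    (Finset.mem_coe.mpr hy)
  have hball : ν.real (closedBall a δ) ≤ C * δ ^ t :=
    ENNReal.toReal_le_of_le_ofReal (by positivity) (hup a δ hδ)
  have hPa := hmass ν ‹_› hK.isBounded hd hup α hα P hP a ha
  calc δ ^ r * p / 4 < δ ^ r * (p - p / 2) := by nlinarith [Real.rpow_pos_of_pos hδ r]
    _ ≤ δ ^ r * (ν.real (P a) - ν.real (closedBall a δ)) := by gcongr; linarith
    _ ≤ voronoiI ν r α P a := hP.mul_sub_le_voronoiI ha hint hr.le hδ.le

/-- For `C, t > 0` and an integer `n ≥ 1` there is `d_n > 0` (depending only on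
`C, t, n, r` and the space) such that for every Borel probability measure `ν` with compact
support of diameter at most `1` satisfying `ν(B(x,ε)) ≤ C·ε^t`, every `n`-optimal set `α` and
every Voronoi partition `P`: `min_{a∈α} I_a(α,ν) > d_n`. -/
theorem stmt7 {E : Type*} [NormedAddCommGroup E] [NormedSpace ℝ E]
    [MeasurableSpace E] [BorelSpace E] [FiniteDimensional ℝ E]
    (r : ℝ) (hr : 0 < r)
    (C t : ℝ) (hC : 0 < C) (ht : 0 < t) (n : ℕ) (hn : 1 ≤ n) :
    ∃ d : ℝ, 0 < d ∧
      ∀ ν : MeasureTheory.Measure E, MeasureTheory.IsProbabilityMeasure ν →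
        IsCompact (msupp ν) → Metric.diam (msupp ν) ≤ 1 →
        (∀ x : E, ∀ ε : ℝ, 0 < ε →
          ν (Metric.closedBall x ε) ≤ ENNReal.ofReal (C * ε ^ t)) →
        ∀ α : Finset E, IsOptimalSet ν r n α →
          ∀ P : E → Set E, IsVoronoiPartition α P →
            ∀ a ∈ α, d < voronoiI ν r α P a :=
  stmt7_general r hr C t hC ht n
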